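/- (Non-resonance of separated frequencies) Let $N_1 \gg N_5 > 0$ and let $C_1, C_2, C_3, C_4 > 0$, $r_1,\dots,r_5 \in \mathbb{R}$ with $|r_i| \le \epsilon N_1$ for $\epsilon$ sufficiently small (depending on the $C_i$). Set $\xi_i = C_i N_1 + r_i$ for $i = 1,\dots,4$ and $\xi_5 = r_5$. Then $\big|(\xi_1+\xi_2+\xi_3+\xi_4 \pm \xi_5)^4 - (\xi_1^4+\xi_2^4+\xi_3^4+\xi_4^4 \pm \xi_5^4)\big| \ge c\, N_1^4$ for a positive constant $c$ depending only on $C_1,\dots,C_4$. -/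

import Mathlib

/-!
Dividing by `N₁⁴` turns the resonance function into a polynomial in the ratios `rᵢ / N₁`, whose
value at `0` is `(C₁ + C₂ + C₃ + C₄)⁴ - (C₁⁴ + C₂⁴ + C₃⁴ + C₄⁴) > 0` by strict superadditivity of
`t ↦ t⁴` on positive reals. By continuity it stays above half that value when all ratios are at
most some `ε`.
-/

theorem pow_add_pow_lt {R : Type*} [Semiring R] [PartialOrder R] [IsStrictOrderedRing R]
    {x y : R} (hx : 0 < x) (hy : 0 < y) {n : ℕ} (hn : 2 ≤ n) :
    x ^ n + y ^ n < (x + y) ^ n := by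
  obtain ⟨m, rfl⟩ : ∃ m, n = m + 1 := ⟨n - 1, by omega⟩
  have hm : m ≠ 0 := by omega
  calc x ^ (m + 1) + y ^ (m + 1) = x * x ^ m + y * y ^ m := by rw [pow_succ', pow_succ']
    _ < x * (x + y) ^ m + y * (x + y) ^ m := by
      have hxm : x ^ m < (x + y) ^ m := pow_lt_pow_left₀ (lt_add_of_pos_right x hy) hx.le hm
      have hym : y ^ m < (x + y) ^ m := pow_lt_pow_left₀ (lt_add_of_pos_left y hx) hy.le hm
      exact add_lt_add (mul_lt_mul_of_pos_left hxm hx) (mul_lt_mul_of_pos_left hym hy)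
    _ = (x + y) ^ (m + 1) := by rw [← add_mul, pow_succ']

/-- For `σ = ±1` this is the resonance function of `ξ₁ + ξ₂ + ξ₃ + ξ₄ ± η`, with `±η⁴` on the
right-hand side. -/
def resonance (σ ξ₁ ξ₂ ξ₃ ξ₄ η : ℝ) : ℝ :=
  (ξ₁ + ξ₂ + ξ₃ + ξ₄ + σ * η) ^ 4 - (ξ₁ ^ 4 + ξ₂ ^ 4 + ξ₃ ^ 4 + ξ₄ ^ 4 + σ * η ^ 4)

theorem resonance_mul (σ t ξ₁ ξ₂ ξ₃ ξ₄ η : ℝ) :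
    resonance σ (t * ξ₁) (t * ξ₂) (t * ξ₃) (t * ξ₄) (t * η) =
      t ^ 4 * resonance σ ξ₁ ξ₂ ξ₃ ξ₄ η := by
  unfold resonance; ring

theorem resonance_pos {σ C₁ C₂ C₃ C₄ : ℝ} (h₁ : 0 < C₁) (h₂ : 0 < C₂) (h₃ : 0 < C₃)
    (h₄ : 0 < C₄) : 0 < resonance σ C₁ C₂ C₃ C₄ 0 := by
  have h₁₂ := pow_add_pow_lt h₁ h₂ (n := 4) (by norm_num)
  have h₁₂₃ := pow_add_pow_lt (add_pos h₁ h₂) h₃ (n := 4) (by norm_num)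
  have h₁₂₃₄ := pow_add_pow_lt (add_pos (add_pos h₁ h₂) h₃) h₄ (n := 4) (by norm_num)
  unfold resonance
  linarith

theorem exists_lt_resonance_of_abs_le (σ C₁ C₂ C₃ C₄ : ℝ) {c : ℝ}
    (hc : c < resonance σ C₁ C₂ C₃ C₄ 0) :
    ∃ δ > 0, ∀ x₁ x₂ x₃ x₄ η : ℝ, |x₁| ≤ δ → |x₂| ≤ δ → |x₃| ≤ δ → |x₄| ≤ δ → |η| ≤ δ →
      c < resonance σ (C₁ + x₁) (C₂ + x₂) (C₃ + x₃) (C₄ + x₄) η := by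
  set f : (Fin 5 → ℝ) → ℝ := fun x ↦ resonance σ (C₁ + x 0) (C₂ + x 1) (C₃ + x 2) (C₄ + x 3) (x 4)
  have hf : Continuous f := by unfold f resonance; fun_prop
  have hf0 : c < f 0 := by simpa [f] using hc
  obtain ⟨δ, hδ, hball⟩ := Metric.nhds_basis_closedBall.eventually_iff.1
    (continuousAt_const.eventually_lt hf.continuousAt hf0)
  refine ⟨δ, hδ, fun x₁ x₂ x₃ x₄ η h₁ h₂ h₃ h₄ h₅ ↦ hball (x := ![x₁, x₂, x₃, x₄, η]) ?_⟩
  rw [Metric.mem_closedBall, dist_zero_right, pi_norm_le_iff_of_nonneg hδ.le]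
  intro i
  fin_cases i <;> assumption

theorem le_abs_resonance_of_abs_le_mul {σ C₁ C₂ C₃ C₄ δ ε c N r₁ r₂ r₃ r₄ r₅ : ℝ}
    (hN : 0 < N)
    (hδ : ∀ x₁ x₂ x₃ x₄ η : ℝ, |x₁| ≤ δ → |x₂| ≤ δ → |x₃| ≤ δ → |x₄| ≤ δ → |η| ≤ δ →
      c < resonance σ (C₁ + x₁) (C₂ + x₂) (C₃ + x₃) (C₄ + x₄) η) (hεδ : ε ≤ δ)
    (hr₁ : |r₁| ≤ ε * N) (hr₂ : |r₂| ≤ ε * N) (hr₃ : |r₃| ≤ ε * N) (hr₄ : |r₄| ≤ ε * N)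
    (hr₅ : |r₅| ≤ ε * N) :
    c * N ^ 4 ≤ |resonance σ (C₁ * N + r₁) (C₂ * N + r₂) (C₃ * N + r₃) (C₄ * N + r₄) r₅| := by
  have hscale : ∀ r : ℝ, |r| ≤ ε * N → |r / N| ≤ δ := fun r hr ↦ by
    rw [abs_div, abs_of_pos hN, div_le_iff₀ hN]
    exact hr.trans (by gcongr)
  have hrescale : resonance σ (C₁ * N + r₁) (C₂ * N + r₂) (C₃ * N + r₃) (C₄ * N + r₄) r₅ =
      N ^ 4 * resonance σ (C₁ + r₁ / N) (C₂ + r₂ / N) (C₃ + r₃ / N) (C₄ + r₄ / N) (r₅ / N) := by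
    rw [← resonance_mul]
    congr 1 <;> field_simp
  rw [hrescale, abs_mul, abs_of_pos (by positivity), mul_comm]
  gcongr
  exact (hδ _ _ _ _ _ (hscale _ hr₁) (hscale _ hr₂) (hscale _ hr₃) (hscale _ hr₄)
    (hscale _ hr₅)).le.trans (le_abs_self _)

/-- Non-resonance of separated frequencies: for `C₁,…,C₄ > 0` there are `ε, c > 0` such
that for `N₁ ≫ N₅ > 0` and perturbations `|rᵢ| ≤ ε N₁`, with `ξᵢ = Cᵢ N₁ + rᵢ`
(`i = 1,…,4`) and `ξ₅ = r₅`, one has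
`|(ξ₁+ξ₂+ξ₃+ξ₄ ± ξ₅)⁴ - (ξ₁⁴+ξ₂⁴+ξ₃⁴+ξ₄⁴ ± ξ₅⁴)| ≥ c N₁⁴` (both sign choices). -/
theorem nonresonance_separated_frequencies (C₁ C₂ C₃ C₄ : ℝ)
    (h₁ : 0 < C₁) (h₂ : 0 < C₂) (h₃ : 0 < C₃) (h₄ : 0 < C₄) :
    ∃ ε : ℝ, 0 < ε ∧ ∃ c : ℝ, 0 < c ∧
      ∀ N₁ N₅ : ℝ, 0 < N₁ → 0 < N₅ → N₅ ≤ ε * N₁ →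
        ∀ r₁ r₂ r₃ r₄ r₅ : ℝ,
          |r₁| ≤ ε * N₁ → |r₂| ≤ ε * N₁ → |r₃| ≤ ε * N₁ → |r₄| ≤ ε * N₁ → |r₅| ≤ ε * N₁ →
          c * N₁ ^ 4 ≤
              |((C₁ * N₁ + r₁) + (C₂ * N₁ + r₂) + (C₃ * N₁ + r₃) + (C₄ * N₁ + r₄) + r₅) ^ 4
                - ((C₁ * N₁ + r₁) ^ 4 + (C₂ * N₁ + r₂) ^ 4 + (C₃ * N₁ + r₃) ^ 4
                    + (C₄ * N₁ + r₄) ^ 4 + r₅ ^ 4)| ∧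
          c * N₁ ^ 4 ≤
              |((C₁ * N₁ + r₁) + (C₂ * N₁ + r₂) + (C₃ * N₁ + r₃) + (C₄ * N₁ + r₄) - r₅) ^ 4
                - ((C₁ * N₁ + r₁) ^ 4 + (C₂ * N₁ + r₂) ^ 4 + (C₃ * N₁ + r₃) ^ 4
                    + (C₄ * N₁ + r₄) ^ 4 - r₅ ^ 4)| := by
  have hD : 0 < resonance 1 C₁ C₂ C₃ C₄ 0 := resonance_pos h₁ h₂ h₃ h₄
  have hD' : resonance (-1) C₁ C₂ C₃ C₄ 0 = resonance 1 C₁ C₂ C₃ C₄ 0 := by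
    unfold resonance; ring
  obtain ⟨δ₁, hδ₁, hplus⟩ := exists_lt_resonance_of_abs_le 1 C₁ C₂ C₃ C₄ (half_lt_self hD)
  obtain ⟨δ₂, hδ₂, hminus⟩ := exists_lt_resonance_of_abs_le (-1) C₁ C₂ C₃ C₄
    (c := resonance 1 C₁ C₂ C₃ C₄ 0 / 2) (by rw [hD']; exact half_lt_self hD)
  refine ⟨min δ₁ δ₂, lt_min hδ₁ hδ₂, _, half_pos hD,
    fun N₁ _ hN₁ _ _ r₁ r₂ r₃ r₄ r₅ hr₁ hr₂ hr₃ hr₄ hr₅ ↦ ⟨?_, ?_⟩⟩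
  · convert le_abs_resonance_of_abs_le_mul hN₁ hplus (min_le_left _ _) hr₁ hr₂ hr₃ hr₄ hr₅
      using 2
    unfold resonance; ring
  · convert le_abs_resonance_of_abs_le_mul hN₁ hminus (min_le_right _ _) hr₁ hr₂ hr₃ hr₄ hr₅
      using 2
    unfold resonance; ring
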